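/- arXiv:math/0306051 — 2 statements merged into one kernel-verified Lean document; each statement's English description precedes it below -/
import Mathlib

section
/- For all l ∈ ℕ and n ≥ 1, the product of the leading coefficients of the first n orthogonal polynomials at level l satisfies k^l_1 · k^l_2 ⋯ k^l_n = √(s_l / D_{l,l+n}). -/
open Polynomial Filter Finset

/-- The complementary quantity `d_{k,j} = (1 - |γ_{k,j}|²)^{1/2}`. -/
noncomputable def dd (γ : ℕ → ℕ → ℂ) (k j : ℕ) : ℝ :=
  Real.sqrt (1 - ‖γ k j‖ ^ 2)

/-- The pair `(φ_n(·,l), φ♯_n(·,l))` of Szegő-type orthogonal polynomials attached to the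
Schur parameters `γ` and the diagonal `s`, defined by the recurrences
`φ_n(X,l) = d_{l,n+l}⁻¹ (X φ_{n-1}(X,l+1) - γ_{l,n+l} φ♯_{n-1}(X,l))` and
`φ♯_n(X,l) = d_{l,n+l}⁻¹ (-conj(γ_{l,n+l}) X φ_{n-1}(X,l+1) + φ♯_{n-1}(X,l))`,
with `φ_0(X,l) = φ♯_0(X,l) = s_l^{-1/2}`. -/
noncomputable def phiPair (s : ℕ → ℝ) (γ : ℕ → ℕ → ℂ) : ℕ → ℕ → Polynomial ℂ × Polynomial ℂ
  | 0, l => (Polynomial.C (((Real.sqrt (s l))⁻¹ : ℝ) : ℂ),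
             Polynomial.C (((Real.sqrt (s l))⁻¹ : ℝ) : ℂ))
  | n + 1, l =>
      (Polynomial.C (((dd γ l (n + 1 + l))⁻¹ : ℝ) : ℂ) *
         (Polynomial.X * (phiPair s γ n (l + 1)).1 -
           Polynomial.C (γ l (n + 1 + l)) * (phiPair s γ n l).2),
       Polynomial.C (((dd γ l (n + 1 + l))⁻¹ : ℝ) : ℂ) *
         (-(Polynomial.C ((starRingEnd ℂ) (γ l (n + 1 + l))) * Polynomial.X *
             (phiPair s γ n (l + 1)).1) +
           (phiPair s γ n l).2))

/-- The orthogonal polynomial `φ_n(X,l)`. -/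
noncomputable def phi (s : ℕ → ℝ) (γ : ℕ → ℕ → ℂ) (n l : ℕ) : Polynomial ℂ :=
  (phiPair s γ n l).1

/-- The reversed polynomial `φ♯_n(X,l)`. -/
noncomputable def phiSharp (s : ℕ → ℝ) (γ : ℕ → ℕ → ℂ) (n l : ℕ) : Polynomial ℂ :=
  (phiPair s γ n l).2

/-- The determinant `D_{r,q} = (∏_{k=r}^q s_k) ∏_{r ≤ k < j ≤ q} d_{k,j}²` of the positive
definite kernel associated with the parameters `γ`. -/
noncomputable def Ddet (s : ℕ → ℝ) (γ : ℕ → ℕ → ℂ) (r q : ℕ) : ℝ :=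
  (∏ k ∈ Finset.Icc r q, s k) *
    ∏ k ∈ Finset.Icc r q, ∏ j ∈ Finset.Icc (k + 1) q, (dd γ k j) ^ 2

/-!
Only `X φ_{n-1}(X,l+1)` reaches degree `n` in the recursion for `φ_n(X,l)`, since `φ♯_{n-1}(X,l)`
has degree below `n`; hence `k^l_n = d_{l,l+n}⁻¹ k^{l+1}_{n-1}`, i.e.
`k^l_n = (s_{l+n} ∏_{k=l}^{l+n-1} d_{k,l+n}²)^{-1/2}`. The quantity under the root is the ratio
`D_{l,l+n} / D_{l,l+n-1}`, so, as `D_{l,l} = s_l`, the product of the `k^l_m` telescopes to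
`(D_{l,l+n} / s_l)^{-1/2}`.
-/

lemma dd_pos {γ : ℕ → ℕ → ℂ} (hγ : ∀ k j, k < j → ‖γ k j‖ < 1) {k j : ℕ} (h : k < j) :
    0 < dd γ k j :=
  Real.sqrt_pos.mpr (by nlinarith [hγ k j h, norm_nonneg (γ k j)])

lemma dd_nonneg (γ : ℕ → ℕ → ℂ) (k j : ℕ) : 0 ≤ dd γ k j :=
  Real.sqrt_nonneg _

noncomputable def DdetFactor (s : ℕ → ℝ) (γ : ℕ → ℕ → ℂ) (r q : ℕ) : ℝ :=
  s q * ∏ k ∈ Ico r q, dd γ k q ^ 2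

section DdetFactor

variable (s : ℕ → ℝ) (γ : ℕ → ℕ → ℂ)

lemma Ddet_eq_prod_DdetFactor (r q : ℕ) :
    Ddet s γ r q = ∏ j ∈ Icc r q, DdetFactor s γ r j := by
  have hswap : ∏ k ∈ Icc r q, ∏ j ∈ Icc (k + 1) q, dd γ k j ^ 2 =
      ∏ j ∈ Icc r q, ∏ k ∈ Ico r j, dd γ k j ^ 2 :=
    prod_comm' fun k j => by simp only [mem_Icc, mem_Ico]; omega
  rw [Ddet, hswap, ← prod_mul_distrib]
  rfl

lemma DdetFactor_self (r : ℕ) : DdetFactor s γ r r = s r := by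
  simp [DdetFactor]

lemma DdetFactor_of_lt {r q : ℕ} (h : r < q) :
    DdetFactor s γ r q = dd γ r q ^ 2 * DdetFactor s γ (r + 1) q := by
  simp only [DdetFactor, ← insert_Ico_add_one_left_eq_Ico h,
    prod_insert (by simp : r ∉ Ico (r + 1) q)]
  ring

lemma DdetFactor_pos (hs : ∀ l, 0 < s l) (hγ : ∀ k j, k < j → ‖γ k j‖ < 1)
    (r q : ℕ) : 0 < DdetFactor s γ r q :=
  mul_pos (hs q) <| prod_pos fun _ hk => pow_pos (dd_pos hγ (mem_Ico.mp hk).2) 2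

lemma sqrt_DdetFactor_of_lt {r q : ℕ} (h : r < q) :
    √(DdetFactor s γ r q) = dd γ r q * √(DdetFactor s γ (r + 1) q) := by
  rw [DdetFactor_of_lt s γ h, Real.sqrt_mul (sq_nonneg _),
    Real.sqrt_sq (dd_nonneg γ r q)]

lemma Ddet_eq_mul_prod_DdetFactor (l n : ℕ) :
    Ddet s γ l (l + n) = s l * ∏ m ∈ Icc 1 n, DdetFactor s γ l (l + m) := by
  rw [Ddet_eq_prod_DdetFactor, ← insert_Icc_add_one_left_eq_Icc (Nat.le_add_right l n),
    prod_insert (by simp), DdetFactor_self, ← map_add_left_Icc, prod_map]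
  rfl

lemma sqrt_div_Ddet (hs : ∀ l, 0 < s l) (hγ : ∀ k j, k < j → ‖γ k j‖ < 1) (l n : ℕ) :
    √(s l / Ddet s γ l (l + n)) = ∏ m ∈ Icc 1 n, (√(DdetFactor s γ l (l + m)))⁻¹ := by
  rw [Ddet_eq_mul_prod_DdetFactor, div_mul_cancel_left₀ (hs l).ne', Real.sqrt_inv,
    Real.sqrt_prod _ fun m _ => (DdetFactor_pos s γ hs hγ _ _).le, prod_inv_distrib]

end DdetFactor

section phi

variable (s : ℕ → ℝ) (γ : ℕ → ℕ → ℂ)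

lemma phi_succ (n l : ℕ) :
    phi s γ (n + 1) l = C (((dd γ l (n + 1 + l))⁻¹ : ℝ) : ℂ) *
      (X * phi s γ n (l + 1) - C (γ l (n + 1 + l)) * phiSharp s γ n l) :=
  rfl

lemma phiSharp_succ (n l : ℕ) :
    phiSharp s γ (n + 1) l = C (((dd γ l (n + 1 + l))⁻¹ : ℝ) : ℂ) *
      (-(C (starRingEnd ℂ (γ l (n + 1 + l))) * X * phi s γ n (l + 1)) + phiSharp s γ n l) :=
  rfl

lemma natDegree_phi_le_and_natDegree_phiSharp_le (n l : ℕ) :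
    (phi s γ n l).natDegree ≤ n ∧ (phiSharp s γ n l).natDegree ≤ n := by
  induction n generalizing l with
  | zero => exact ⟨(natDegree_C _).le, (natDegree_C _).le⟩
  | succ n ih =>
    have hX : (X * phi s γ n (l + 1)).natDegree ≤ 1 + n :=
      natDegree_mul_le_of_le natDegree_X_le (ih (l + 1)).1
    have hCX (a : ℂ) : (C a * X * phi s γ n (l + 1)).natDegree ≤ 1 + n :=
      natDegree_mul_le_of_le ((natDegree_C_mul_le _ _).trans natDegree_X_le) (ih (l + 1)).1
    rw [phi_succ, phiSharp_succ]
    refine ⟨(natDegree_C_mul_le _ _).trans ?_, (natDegree_C_mul_le _ _).trans ?_⟩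
    · exact (natDegree_sub_le _ _).trans <|
        max_le (by omega) ((natDegree_C_mul_le _ _).trans ((ih l).2.trans n.le_succ))
    · refine (natDegree_add_le _ _).trans (max_le ?_ ((ih l).2.trans n.le_succ))
      rw [natDegree_neg]
      exact (hCX _).trans (by omega)

lemma coeff_phi_self (n l : ℕ) :
    (phi s γ n l).coeff n = (((√(DdetFactor s γ l (l + n)))⁻¹ : ℝ) : ℂ) := by
  induction n generalizing l with
  | zero => simp [phi, phiPair, DdetFactor_self]
  | succ n ih =>
    have hsharp : (phiSharp s γ n l).coeff (n + 1) = 0 :=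
      coeff_eq_zero_of_natDegree_lt (Nat.lt_succ_of_le
        (natDegree_phi_le_and_natDegree_phiSharp_le s γ n l).2)
    rw [phi_succ, coeff_C_mul, coeff_sub, coeff_X_mul, coeff_C_mul, hsharp, ih,
      sqrt_DdetFactor_of_lt s γ (by omega : l < l + (n + 1)), mul_inv,
      show l + 1 + n = l + (n + 1) by omega, show n + 1 + l = l + (n + 1) by omega]
    push_cast
    ring

lemma leadingCoeff_phi (hs : ∀ l, 0 < s l) (hγ : ∀ k j, k < j → ‖γ k j‖ < 1) (n l : ℕ) :
    (phi s γ n l).leadingCoeff = (((√(DdetFactor s γ l (l + n)))⁻¹ : ℝ) : ℂ) := by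
  have hcoeff : (phi s γ n l).coeff n ≠ 0 := by
    rw [coeff_phi_self]
    exact_mod_cast (inv_pos.mpr (Real.sqrt_pos.mpr (DdetFactor_pos s γ hs hγ l (l + n)))).ne'
  rw [leadingCoeff, natDegree_eq_of_le_of_coeff_ne_zero
    (natDegree_phi_le_and_natDegree_phiSharp_le s γ n l).1 hcoeff, coeff_phi_self]

end phi

theorem prod_leadingCoeff_general (s : ℕ → ℝ) (γ : ℕ → ℕ → ℂ)
    (hs : ∀ l, 0 < s l) (hγ : ∀ k j, k < j → ‖γ k j‖ < 1) (n l : ℕ) :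
    ∏ m ∈ Finset.Icc 1 n, (phi s γ m l).leadingCoeff =
      ((Real.sqrt (s l / Ddet s γ l (l + n)) : ℝ) : ℂ) := by
  rw [sqrt_div_Ddet s γ hs hγ, Complex.ofReal_prod]
  exact prod_congr rfl fun m _ => leadingCoeff_phi s γ hs hγ m l

/-- For all `l ∈ ℕ` and `n ≥ 1`, the product of the leading coefficients of the first `n`
orthogonal polynomials at level `l` satisfies `k^l_1 ⋯ k^l_n = √(s_l / D_{l,l+n})`. -/
theorem prod_leadingCoeff (s : ℕ → ℝ) (γ : ℕ → ℕ → ℂ)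
    (hs : ∀ l, 0 < s l) (hγ : ∀ k j, k < j → ‖γ k j‖ < 1) (n l : ℕ) (hn : 1 ≤ n) :
    ∏ m ∈ Finset.Icc 1 n, (phi s γ m l).leadingCoeff =
      ((Real.sqrt (s l / Ddet s γ l (l + n)) : ℝ) : ℂ) :=
  prod_leadingCoeff_general s γ hs hγ n l
end

section
/- For every n ≥ 1, the determinant of the (n+1)×(n+1) Hilbert matrix satisfies det [1/(i+j+1)]_{0 ≤ i,j ≤ n} = (∏_{k=1}^{n+1} 1/(2k−1)) · ∏_{l=0}^{n−1} ∏_{k=1}^{n−l} (k/(k+2l+1))². -/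
/-!
The Hilbert matrix is the Cauchy matrix `[1 / (x i + y j)]` with `x i = i` and `y j = j + 1`.
One step of Gaussian elimination with pivot in the last row and column of a Cauchy matrix leaves
a Schur complement that is again a Cauchy matrix, with rows rescaled by
`(x l - x i) / (x i + y l)` and columns by `(y l - y j) / (x l + y j)`. For the Hilbert matrix this
gives `det H (n + 2) = det H (n + 1) / (2n + 3) * ∏_{l ≤ n} ((n + 1 - l) / (n + l + 2))²`, which is
exactly the factor by which the right-hand side grows when `n` increases by one.
-/

open Finset

theorem prod_range_prod_Icc_sq_succ (n : ℕ) :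
    ∏ l ∈ range (n + 1), ∏ k ∈ Icc 1 (n + 1 - l), ((k : ℝ) / (k + 2 * l + 1)) ^ 2 =
      (∏ l ∈ range n, ∏ k ∈ Icc 1 (n - l), ((k : ℝ) / (k + 2 * l + 1)) ^ 2) *
        ∏ l ∈ range (n + 1), ((n + 1 - l : ℝ) / (n + l + 2)) ^ 2 := by
  have hrow : ∀ l ∈ range (n + 1),
      ∏ k ∈ Icc 1 (n + 1 - l), ((k : ℝ) / (k + 2 * l + 1)) ^ 2 =
        (∏ k ∈ Icc 1 (n - l), ((k : ℝ) / (k + 2 * l + 1)) ^ 2) *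
          ((n + 1 - l : ℝ) / (n + l + 2)) ^ 2 := by
    intro l hl
    have hl : l ≤ n := Nat.lt_succ_iff.mp (mem_range.mp hl)
    rw [Nat.sub_add_comm hl, prod_Icc_succ_top (by omega)]
    congr 1
    push_cast [Nat.cast_sub hl]
    ring
  rw [prod_congr rfl hrow, prod_mul_distrib, prod_range_succ]
  simp

namespace Matrix

variable {K : Type*} [Field K]

theorem det_succ_eq_mul_det_schur {m : ℕ} (A : Matrix (Fin (m + 1)) (Fin (m + 1)) K)
    (hA : A (Fin.last m) (Fin.last m) ≠ 0) :
    A.det = A (Fin.last m) (Fin.last m) * det (of fun i j : Fin m =>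
      A i.castSucc j.castSucc -
        A i.castSucc (Fin.last m) / A (Fin.last m) (Fin.last m) * A (Fin.last m) j.castSucc) := by
  set l := Fin.last m
  set B : Matrix (Fin (m + 1)) (Fin (m + 1)) K :=
    of fun i j => if i = l then A i j else A i j - A i l / A l l * A l j
  have hB_col : ∀ i, i ≠ l → B i l = 0 := fun i hi => by
    simp [B, hi, div_mul_cancel₀ _ hA]
  have hAB : A.det = B.det :=
    det_eq_of_forall_row_eq_smul_add_const (fun i => if i = l then 0 else A i l / A l l) l
      (if_pos rfl) fun i j => by by_cases hi : i = l <;> simp [B, hi]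
  rw [hAB, det_succ_column B l, sum_eq_single l (fun i _ hi => by simp [hB_col i hi]) (by simp)]
  have hsign : (-1 : K) ^ ((l : ℕ) + l) = 1 := by rw [← two_mul, pow_mul]; norm_num
  rw [hsign, one_mul, Fin.succAbove_last]
  congr 1
  · simp [B]
  · congr 1
    ext i j
    have hi : i.castSucc ≠ l := (Fin.castSucc_lt_last i).ne
    simp [B, hi]

def cauchyMatrix {ι κ : Type*} (x : ι → K) (y : κ → K) : Matrix ι κ K :=
  of fun i j => (x i + y j)⁻¹

theorem det_cauchyMatrix_succ {m : ℕ} (x y : Fin (m + 1) → K) (h : ∀ i j, x i + y j ≠ 0) :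
    det (cauchyMatrix x y) =
      (x (Fin.last m) + y (Fin.last m))⁻¹ *
        (∏ i : Fin m, (x (Fin.last m) - x i.castSucc) / (x i.castSucc + y (Fin.last m))) *
        (∏ j : Fin m, (y (Fin.last m) - y j.castSucc) / (x (Fin.last m) + y j.castSucc)) *
        det (cauchyMatrix (x ∘ Fin.castSucc) (y ∘ Fin.castSucc)) := by
  set l := Fin.last m
  rw [det_succ_eq_mul_det_schur _ (inv_ne_zero (h l l))]
  have hschur : (of fun i j : Fin m => cauchyMatrix x y i.castSucc j.castSucc -
        cauchyMatrix x y i.castSucc l / cauchyMatrix x y l l * cauchyMatrix x y l j.castSucc) =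
      of fun i j => (x l - x i.castSucc) / (x i.castSucc + y l) *
        of (fun i j => (y l - y j.castSucc) / (x l + y j.castSucc) *
          cauchyMatrix (x ∘ Fin.castSucc) (y ∘ Fin.castSucc) i j) i j := by
    ext i j
    have := h i.castSucc j.castSucc
    have := h i.castSucc l
    have := h l j.castSucc
    have := h l l
    simp only [cauchyMatrix, of_apply, Function.comp_apply]
    field_simp
    ring
  rw [hschur, det_mul_column, det_mul_row]
  simp only [cauchyMatrix, of_apply]
  ring

noncomputable def hilbertMatrix (n : ℕ) : Matrix (Fin n) (Fin n) ℝ :=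
  of fun i j => 1 / ((i : ℕ) + (j : ℕ) + 1)

theorem hilbertMatrix_eq_cauchyMatrix (n : ℕ) :
    hilbertMatrix n =
      cauchyMatrix (fun i : Fin n => ((i : ℕ) : ℝ)) (fun j : Fin n => ((j : ℕ) : ℝ) + 1) := by
  ext i j
  simp [hilbertMatrix, cauchyMatrix, add_assoc]

theorem det_hilbertMatrix_succ_succ (n : ℕ) :
    det (hilbertMatrix (n + 2)) =
      (2 * n + 3 : ℝ)⁻¹ * (∏ l ∈ range (n + 1), ((n + 1 - l : ℝ) / (n + l + 2)) ^ 2) *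
        det (hilbertMatrix (n + 1)) := by
  rw [hilbertMatrix_eq_cauchyMatrix, det_cauchyMatrix_succ _ _ (fun i j => by positivity),
    hilbertMatrix_eq_cauchyMatrix]
  simp only [Fin.val_last, Fin.val_castSucc, Function.comp_def]
  rw [mul_assoc _ (∏ i : Fin (n + 1), _) (∏ i : Fin (n + 1), _), ← prod_mul_distrib, prod_range]
  congr 2
  · push_cast
    ring
  · refine prod_congr rfl fun l _ => ?_
    push_cast
    ring

theorem det_hilbertMatrix (n : ℕ) :
    det (hilbertMatrix (n + 1)) =
      (∏ k ∈ Icc 1 (n + 1), 1 / (2 * (k : ℝ) - 1)) *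
        ∏ l ∈ range n, ∏ k ∈ Icc 1 (n - l), ((k : ℝ) / (k + 2 * l + 1)) ^ 2 := by
  induction n with
  | zero => rw [det_fin_one]; norm_num [hilbertMatrix]
  | succ n ih =>
    rw [det_hilbertMatrix_succ_succ, ih, prod_Icc_succ_top (b := n + 1) (by omega),
      prod_range_prod_Icc_sq_succ]
    push_cast
    ring

end Matrix

theorem hilbert_matrix_det_general (n : ℕ) :
    Matrix.det (Matrix.of fun i j : Fin (n + 1) => (1 : ℝ) / ((i : ℕ) + (j : ℕ) + 1)) =
      (∏ k ∈ Finset.Icc 1 (n + 1), 1 / (2 * (k : ℝ) - 1)) *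
        ∏ l ∈ Finset.range n, ∏ k ∈ Finset.Icc 1 (n - l),
          ((k : ℝ) / ((k : ℝ) + 2 * (l : ℝ) + 1)) ^ 2 :=
  Matrix.det_hilbertMatrix n

/-- For every `n ≥ 1`, the determinant of the `(n+1) × (n+1)` Hilbert matrix satisfies
`det [1/(i+j+1)] = (∏_{k=1}^{n+1} 1/(2k-1)) ∏_{l=0}^{n-1} ∏_{k=1}^{n-l} (k/(k+2l+1))²`. -/
theorem hilbert_matrix_det (n : ℕ) (hn : 1 ≤ n) :
    Matrix.det (Matrix.of fun i j : Fin (n + 1) => (1 : ℝ) / ((i : ℕ) + (j : ℕ) + 1)) =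
      (∏ k ∈ Finset.Icc 1 (n + 1), 1 / (2 * (k : ℝ) - 1)) *
        ∏ l ∈ Finset.range n, ∏ k ∈ Finset.Icc 1 (n - l),
          ((k : ℝ) / ((k : ℝ) + 2 * (l : ℝ) + 1)) ^ 2 :=
  hilbert_matrix_det_general n
end
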